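/- arXiv:1507.05751 — 3 statements merged into one kernel-verified Lean document; each statement's English description precedes it below -/
import Mathlib

section
/- Let m = 2l and n = 2t be even positive integers, σ a permutation of Z_2^t, and g : Z_2^t → Z_m any function. Then the function f : Z_2^t × Z_2^t → Z_m defined by f(x,y) = g(y) + l·(x · σ(y)) is a generalized bent function of type {m, n}. -/
open Finset

/-- The primitive `m`-th root of unity `e^{2πi/m}`. -/
noncomputable def zeta (m : ℕ) : ℂ := Complex.exp (2 * Real.pi * Complex.I / m)

/-- The inner product `x·y = Σ xᵢ yᵢ` in `Z₂`. -/
def bdot {n : ℕ} (x y : Fin n → ZMod 2) : ZMod 2 := ∑ i, x i * y i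

/-- The Fourier coefficient `W_f(y) = Σ_x (-1)^{x·y} ζ_m^{f(x)}`. -/
noncomputable def Wf {n m : ℕ} (f : (Fin n → ZMod 2) → ZMod m) (y : Fin n → ZMod 2) : ℂ :=
  ∑ x : Fin n → ZMod 2, (-1 : ℂ) ^ (bdot x y).val * zeta m ^ (f x).val

/-- `f : Z₂ⁿ → Z_m` is a generalized bent function of type `{m,n}` if
`|W_f(y)| = 2^{n/2}` for all `y`. -/
def IsGBF {n m : ℕ} (f : (Fin n → ZMod 2) → ZMod m) : Prop :=
  ∀ y : Fin n → ZMod 2, ‖Wf f y‖ = (2 : ℝ) ^ ((n : ℝ) / 2)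

/-! Write the frequency as `(a, b)` and the input as `(x, u)`. Since `ζ_{2l}^{l·w} = (-1)^w`, the
summand is `(-1)^{u·b} ζ^{g(u)} · (-1)^{x·(a + σ u)}`; summing over `x` first, character
orthogonality kills every `u` except `u = σ⁻¹ a`, which contributes `2^t`. Hence
`W_f(a, b) = 2^t (-1)^{σ⁻¹(a)·b} ζ^{g(σ⁻¹ a)}`, of modulus `2^t = 2^{n/2}`. -/

lemma neg_one_pow_val_add (a b : ZMod 2) :
    (-1 : ℂ) ^ (a + b).val = (-1) ^ a.val * (-1) ^ b.val := by
  rw [ZMod.val_add, ← neg_one_pow_eq_pow_mod_two, pow_add]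

lemma neg_one_pow_val_eq_one_iff (a : ZMod 2) : (-1 : ℂ) ^ a.val = 1 ↔ a = 0 := by
  rw [neg_one_pow_eq_one_iff_even (by norm_num), ← ZMod.natCast_eq_zero_iff_even,
    ZMod.natCast_zmod_val]

lemma isPrimitiveRoot_zeta {m : ℕ} (hm : m ≠ 0) : IsPrimitiveRoot (zeta m) m :=
  Complex.isPrimitiveRoot_exp m hm

lemma zeta_pow_val_add {m : ℕ} [NeZero m] (a b : ZMod m) :
    zeta m ^ (a + b).val = zeta m ^ a.val * zeta m ^ b.val := by
  have h := pow_mod_orderOf (zeta m) (a.val + b.val)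
  rw [← (isPrimitiveRoot_zeta (NeZero.ne m)).eq_orderOf] at h
  rw [ZMod.val_add, h, pow_add]

lemma zeta_two_mul_pow_self {l : ℕ} (hl : l ≠ 0) : zeta (2 * l) ^ l = -1 := by
  refine IsPrimitiveRoot.eq_neg_one_of_two_right ?_
  simpa [hl] using (isPrimitiveRoot_zeta (by omega : 2 * l ≠ 0)).pow_of_dvd hl (dvd_mul_left l 2)

lemma zeta_two_mul_pow_val_mul_self {l : ℕ} (hl : l ≠ 0) (w : ZMod 2) :
    zeta (2 * l) ^ ((l : ZMod (2 * l)) * (w.val : ZMod (2 * l))).val = (-1) ^ w.val := by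
  have : NeZero (2 * l) := ⟨by omega⟩
  obtain h | h : w.val = 0 ∨ w.val = 1 := by have := ZMod.val_lt w; omega
  · simp [h]
  · simpa [h, ZMod.val_natCast, Nat.mod_eq_of_lt (by omega : l < 2 * l)] using
      zeta_two_mul_pow_self hl

section Bdot

variable {t : ℕ}

lemma bdot_add_left (x y c : Fin t → ZMod 2) : bdot (x + y) c = bdot x c + bdot y c := by
  simp [bdot, add_mul, Finset.sum_add_distrib]

lemma bdot_add_right (x c d : Fin t → ZMod 2) : bdot x (c + d) = bdot x c + bdot x d := by
  simp [bdot, mul_add, Finset.sum_add_distrib]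

lemma bdot_append (x u a b : Fin t → ZMod 2) :
    bdot (Fin.append x u) (Fin.append a b) = bdot x a + bdot u b := by
  simp only [bdot, Fin.sum_univ_add, Fin.append_left, Fin.append_right]

def bdotChar (c : Fin t → ZMod 2) : AddChar (Fin t → ZMod 2) ℂ where
  toFun x := (-1) ^ (bdot x c).val
  map_zero_eq_one' := by simp [bdot]
  map_add_eq_mul' x y := by simp only [bdot_add_left, neg_one_pow_val_add]

-- `0 : AddChar _ _` is the trivial character.
lemma bdotChar_eq_zero_iff (c : Fin t → ZMod 2) : bdotChar c = 0 ↔ c = 0 := by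
  refine ⟨fun h => ?_, fun h => by ext x; simp [bdotChar, h, bdot]⟩
  funext i
  have h1 := AddChar.eq_zero_iff.mp h (Pi.single i 1)
  have hdot : bdot (Pi.single i 1) c = c i := by simp [bdot, Pi.single_apply]
  simp only [bdotChar, AddChar.coe_mk, hdot] at h1
  exact (neg_one_pow_val_eq_one_iff _).mp h1

lemma sum_neg_one_pow_bdot (c : Fin t → ZMod 2) :
    ∑ x : Fin t → ZMod 2, (-1 : ℂ) ^ (bdot x c).val = if c = 0 then 2 ^ t else 0 := by
  have := (bdotChar c).sum_eq_ite
  simp only [bdotChar_eq_zero_iff, Fintype.card_fun, ZMod.card, Fintype.card_fin] at this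
  rwa [Nat.cast_pow, Nat.cast_ofNat] at this

end Bdot

lemma Wf_append {t k : ℕ} (f : (Fin (t + t) → ZMod 2) → ZMod k) (a b : Fin t → ZMod 2) :
    Wf f (Fin.append a b) = ∑ x : Fin t → ZMod 2, ∑ u : Fin t → ZMod 2,
      (-1 : ℂ) ^ (bdot x a).val * (-1) ^ (bdot u b).val * zeta k ^ (f (Fin.append x u)).val := by
  rw [Wf, ← (Fin.appendEquiv t t).sum_comp, Fintype.sum_prod_type]
  refine Finset.sum_congr rfl fun x _ => Finset.sum_congr rfl fun u _ => ?_
  rw [← neg_one_pow_val_add, ← bdot_append]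
  rfl

section MaioranaMcFarland

variable {l t : ℕ} (σ : Equiv.Perm (Fin t → ZMod 2)) (g : (Fin t → ZMod 2) → ZMod (2 * l))

def maioranaMcFarland (z : Fin (t + t) → ZMod 2) : ZMod (2 * l) :=
  g (fun i => z (Fin.natAdd t i)) +
    (l : ZMod (2 * l)) *
      (((bdot (fun i => z (Fin.castAdd t i)) (σ (fun i => z (Fin.natAdd t i)))).val : ℕ) :
        ZMod (2 * l))

lemma zeta_pow_maioranaMcFarland_append (hl : l ≠ 0) (x u : Fin t → ZMod 2) :
    zeta (2 * l) ^ (maioranaMcFarland σ g (Fin.append x u)).val =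
      zeta (2 * l) ^ (g u).val * (-1) ^ (bdot x (σ u)).val := by
  have : NeZero (2 * l) := ⟨by omega⟩
  simp only [maioranaMcFarland, Fin.append_left, Fin.append_right]
  rw [zeta_pow_val_add, zeta_two_mul_pow_val_mul_self hl]

lemma Wf_maioranaMcFarland_append (hl : l ≠ 0) (a b : Fin t → ZMod 2) :
    Wf (maioranaMcFarland σ g) (Fin.append a b) =
      2 ^ t * ((-1) ^ (bdot (σ.symm a) b).val * zeta (2 * l) ^ (g (σ.symm a)).val) := by
  have hterm : ∀ x u : Fin t → ZMod 2,
      (-1 : ℂ) ^ (bdot x a).val * (-1) ^ (bdot u b).val *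
          zeta (2 * l) ^ (maioranaMcFarland σ g (Fin.append x u)).val =
        ((-1) ^ (bdot u b).val * zeta (2 * l) ^ (g u).val) * (-1) ^ (bdot x (a + σ u)).val := by
    intro x u
    rw [zeta_pow_maioranaMcFarland_append σ g hl, bdot_add_right, neg_one_pow_val_add]
    ring
  simp only [Wf_append, hterm]
  rw [Finset.sum_comm]
  simp only [← Finset.mul_sum, sum_neg_one_pow_bdot]
  rw [Fintype.sum_eq_single (σ.symm a)]
  · simp [ZModModule.add_self, mul_comm]
  · intro u hu
    have hne : a + σ u ≠ 0 := by
      rw [Ne, add_eq_zero_iff_neg_eq, ZModModule.neg_eq_self]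
      exact fun h => hu (σ.eq_symm_apply.mpr h.symm)
    rw [if_neg hne, mul_zero]

lemma norm_Wf_maioranaMcFarland (hl : l ≠ 0) (y : Fin (t + t) → ZMod 2) :
    ‖Wf (maioranaMcFarland σ g) y‖ = 2 ^ t := by
  have hζ : ‖zeta (2 * l)‖ = 1 := (isPrimitiveRoot_zeta (by omega)).norm'_eq_one (by omega)
  rw [← Fin.append_castAdd_natAdd (f := y), Wf_maioranaMcFarland_append σ g hl]
  simp [hζ]

end MaioranaMcFarland

theorem stmt2_general {l t : ℕ} (hl : 1 ≤ l)
    (σ : Equiv.Perm (Fin t → ZMod 2)) (g : (Fin t → ZMod 2) → ZMod (2 * l)) :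
    IsGBF (fun z : Fin (t + t) → ZMod 2 =>
      g (fun i => z (Fin.natAdd t i)) +
        (l : ZMod (2 * l)) *
          (((bdot (fun i => z (Fin.castAdd t i))
              (σ (fun i => z (Fin.natAdd t i)))).val : ℕ) : ZMod (2 * l))) := by
  intro y
  rw [show ((t + t : ℕ) : ℝ) / 2 = t by push_cast; ring, Real.rpow_natCast]
  exact norm_Wf_maioranaMcFarland σ g (by omega) y

theorem stmt2 {l t : ℕ} (hl : 1 ≤ l) (ht : 1 ≤ t)
    (σ : Equiv.Perm (Fin t → ZMod 2)) (g : (Fin t → ZMod 2) → ZMod (2 * l)) :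
    IsGBF (fun z : Fin (t + t) → ZMod 2 =>
      g (fun i => z (Fin.natAdd t i)) +
        (l : ZMod (2 * l)) *
          (((bdot (fun i => z (Fin.castAdd t i))
              (σ (fun i => z (Fin.natAdd t i)))).val : ℕ) : ZMod (2 * l))) :=
  stmt2_general hl σ g
end

section
/- If there exists a boolean bent function f : Z_2^{n+1} → Z_2, then there exists a generalized bent function F : Z_2^n → Z_4. -/
open Finset

/-!
Split `f : Z₂ⁿ⁺¹ → Z₂` into its restrictions `f₀ = f(0, ·)` and `f₁ = f(1, ·)`,
and let `F = 3 f₀ + f₁ + 2 f₀ f₁ (mod 4)`. On each of the four value pairs,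
`i^F = ((1 + i)(-1)^{f₀} + (1 - i)(-1)^{f₁}) / 2`, so
`W_F(y) = (W_f(0, y) + i W_f(1, y)) / 2`. Both Walsh coefficients of `f` are real of absolute
value `2^{(n+1)/2}`, hence `|W_F(y)|² = (2^{n+1} + 2^{n+1}) / 4 = 2ⁿ`.
-/

open Complex

lemma zeta_two : zeta 2 = -1 := by
  rw [zeta, show 2 * Real.pi * I / ((2 : ℕ) : ℂ) = Real.pi * I by push_cast; ring]
  exact exp_pi_mul_I

lemma zeta_four : zeta 4 = I := by
  rw [zeta,
    show 2 * Real.pi * I / ((4 : ℕ) : ℂ) = ((Real.pi / 2 : ℝ) : ℂ) * I by push_cast; ring,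
    exp_mul_I, ← ofReal_cos, ← ofReal_sin, Real.cos_pi_div_two, Real.sin_pi_div_two]
  simp

lemma isGBF_iff_sq {n m : ℕ} (f : (Fin n → ZMod 2) → ZMod m) :
    IsGBF f ↔ ∀ y, ‖Wf f y‖ ^ 2 = 2 ^ n := by
  have h : ((2 : ℝ) ^ ((n : ℝ) / 2)) ^ 2 = 2 ^ n := by
    rw [← Real.rpow_natCast _ 2, ← Real.rpow_mul zero_le_two]
    norm_num
  refine forall_congr' fun y => ?_
  rw [← h, sq_eq_sq₀ (norm_nonneg _) (by positivity)]

lemma neg_one_pow_val_add_s3 (s t : ZMod 2) :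
    (-1 : ℂ) ^ (s + t).val = (-1) ^ s.val * (-1) ^ t.val := by
  rw [ZMod.val_add, ← neg_one_pow_eq_pow_mod_two, pow_add]

lemma bdot_cons {n : ℕ} (ε δ : ZMod 2) (x y : Fin n → ZMod 2) :
    bdot (Fin.cons ε x : Fin (n + 1) → ZMod 2) (Fin.cons δ y) = ε * δ + bdot x y :=
  Fin.sum_univ_succ _

lemma wf_cons {n m : ℕ} (f : (Fin (n + 1) → ZMod 2) → ZMod m) (δ : ZMod 2)
    (y : Fin n → ZMod 2) :
    Wf f (Fin.cons δ y) =
      Wf (fun x => f (Fin.cons 0 x)) y + (-1) ^ δ.val * Wf (fun x => f (Fin.cons 1 x)) y := by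
  rw [Wf, ← (Fin.consEquiv fun _ => ZMod 2).sum_comp, Fintype.sum_prod_type,
    show ∀ g : ZMod 2 → ℂ, ∑ a, g a = g 0 + g 1 from Fin.sum_univ_two, Wf, Wf, mul_sum]
  congr 1 <;> refine sum_congr rfl fun x _ => ?_ <;>
    simp only [Fin.consEquiv, Equiv.coe_fn_mk, bdot_cons, neg_one_pow_val_add_s3]
  · simp
  · simp only [one_mul]
    ring

lemma wf_two_im {n : ℕ} (f : (Fin n → ZMod 2) → ZMod 2) (y : Fin n → ZMod 2) :
    (Wf f y).im = 0 := by
  simp only [Wf, zeta_two, im_sum]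
  refine sum_eq_zero fun x _ => ?_
  rw [← pow_add, ← ofReal_one, ← ofReal_neg, ← ofReal_pow, ofReal_im]

def pairToZMod4 (a b : ZMod 2) : ZMod 4 := (3 * a.val + b.val + 2 * a.val * b.val : ℕ)

lemma zeta_four_pow_pairToZMod4 (a b : ZMod 2) :
    zeta 4 ^ (pairToZMod4 a b).val = ((1 + I) * zeta 2 ^ a.val + (1 - I) * zeta 2 ^ b.val) / 2 := by
  rw [zeta_four, zeta_two]
  have bit : ∀ s : ZMod 2, s = 0 ∨ s = 1 := by decide
  rcases bit a with rfl | rfl <;> rcases bit b with rfl | rfl <;>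
    simp only [pairToZMod4, ZMod.val_zero, show (1 : ZMod 2).val = 1 from rfl] <;>
    norm_num [ZMod.val_ofNat, show (1 : ZMod 4).val = 1 from rfl, pow_succ] <;> ring

lemma wf_pairToZMod4 {n : ℕ} (g h : (Fin n → ZMod 2) → ZMod 2) (y : Fin n → ZMod 2) :
    Wf (fun x => pairToZMod4 (g x) (h x)) y = ((1 + I) * Wf g y + (1 - I) * Wf h y) / 2 := by
  simp only [Wf, zeta_four_pow_pairToZMod4, mul_sum, ← sum_add_distrib, sum_div]
  refine sum_congr rfl fun x _ => ?_
  ring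

lemma wf_pairToZMod4_cons {n : ℕ} (f : (Fin (n + 1) → ZMod 2) → ZMod 2)
    (y : Fin n → ZMod 2) :
    Wf (fun x => pairToZMod4 (f (Fin.cons 0 x)) (f (Fin.cons 1 x))) y =
      (Wf f (Fin.cons 0 y) + I * Wf f (Fin.cons 1 y)) / 2 := by
  rw [wf_pairToZMod4, wf_cons, wf_cons, ZMod.val_zero, show (1 : ZMod 2).val = 1 from rfl]
  ring

lemma norm_add_I_mul_sq {z w : ℂ} (hz : z.im = 0) (hw : w.im = 0) :
    ‖z + I * w‖ ^ 2 = ‖z‖ ^ 2 + ‖w‖ ^ 2 := by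
  simp only [Complex.sq_norm, normSq_apply, add_re, add_im, mul_re, mul_im, I_re, I_im, hz, hw]
  ring

theorem stmt3 {n : ℕ} (h : ∃ f : (Fin (n + 1) → ZMod 2) → ZMod 2, IsGBF f) :
    ∃ F : (Fin n → ZMod 2) → ZMod 4, IsGBF F := by
  obtain ⟨f, hf⟩ := h
  rw [isGBF_iff_sq] at hf
  refine ⟨fun x => pairToZMod4 (f (Fin.cons 0 x)) (f (Fin.cons 1 x)),
    (isGBF_iff_sq _).2 fun y => ?_⟩
  rw [wf_pairToZMod4_cons, norm_div, div_pow, norm_add_I_mul_sq (wf_two_im f _) (wf_two_im f _),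
    hf, hf, RCLike.norm_ofNat]
  ring
end

section
/- Let m = p_1^{a_1}···p_s^{a_s} with distinct odd primes p_i, and let d_i be the multiplicative order of 2 modulo p_i. Then there exists a positive integer l with 2^l ≡ −1 (mod m) if and only if the 2-adic valuations V_2(d_1), ..., V_2(d_s) are all equal to the same integer r ≥ 1. -/
/-!
For an odd prime `p` with `d = ord_p(2)`, we have `2^l ≡ -1 (mod p)` exactly when `d ∣ 2l` but
`d ∤ l`, i.e. when `d ∣ 2l` and `V₂(d) = V₂(l) + 1`. Hence a solution modulo `m` forces
`V₂(d_i) = V₂(l) + 1` for every `i`. Conversely, if all `V₂(d_i) = r ≥ 1`, then any `c` with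
`V₂(c) = r - 1` that is divisible by the odd parts of all `d_i` gives `2^c ≡ -1` modulo every
`p_i`. Raising to the odd power `m` lifts this to `2^(cm) ≡ -1 (mod p_i^(a_i))`, since
`p ∣ y + 1` implies `p^(k+1) ∣ y^(p^k) + 1`. The Chinese remainder theorem finishes the proof.
-/

open Finset

theorem Nat.not_dvd_iff_factorization_eq_succ {p d l : ℕ} (hp : p.Prime) (hl : l ≠ 0)
    (h : d ∣ p * l) : ¬ d ∣ l ↔ d.factorization p = l.factorization p + 1 := by
  have hd : d ≠ 0 := by
    rintro rfl
    exact mul_ne_zero hp.ne_zero hl (zero_dvd_iff.mp h)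
  have hle := (Nat.factorization_le_iff_dvd hd (mul_ne_zero hp.ne_zero hl)).mpr h
  rw [Nat.factorization_mul hp.ne_zero hl, hp.factorization, Finsupp.le_def] at hle
  rw [← Nat.factorization_le_iff_dvd hd hl, Finsupp.le_def]
  push Not
  constructor
  · rintro ⟨q, hq⟩
    have hq' := hle q
    by_cases hqp : q = p
    · subst hqp
      simp only [Finsupp.add_apply, Finsupp.single_eq_same] at hq'
      omega
    · simp only [Finsupp.add_apply, Finsupp.single_eq_of_ne hqp, zero_add] at hq'
      omega
  · intro h
    exact ⟨p, by omega⟩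

theorem Nat.dvd_pow_mul_ordCompl {p d N r : ℕ} (hd : d ∣ N) (hr : d.factorization p ≤ r) :
    d ∣ p ^ r * ordCompl[p] N :=
  calc d = ordProj[p] d * ordCompl[p] d := (Nat.ordProj_mul_ordCompl_eq_self d p).symm
    _ ∣ p ^ r * ordCompl[p] N :=
      mul_dvd_mul (pow_dvd_pow p hr) (Nat.ordCompl_dvd_ordCompl_of_dvd hd p)

theorem Nat.factorization_pow_mul_ordCompl {p N : ℕ} (hp : p.Prime) (hN : N ≠ 0) (r : ℕ) :
    (p ^ r * ordCompl[p] N).factorization p = r := by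
  rw [Nat.factorization_mul (pow_ne_zero r hp.ne_zero) (Nat.ordCompl_pos p hN).ne',
    Finsupp.add_apply, Nat.factorization_ordCompl, Finsupp.erase_same, hp.factorization_pow,
    Finsupp.single_eq_same, add_zero]

theorem pow_eq_neg_one_iff_orderOf {R : Type*} [CommRing R] [NoZeroDivisors R]
    (hR : (-1 : R) ≠ 1) {x : R} {l : ℕ} (hl : l ≠ 0) :
    x ^ l = -1 ↔ orderOf x ∣ 2 * l ∧ (orderOf x).factorization 2 = l.factorization 2 + 1 := by
  have key : x ^ l = -1 ↔ x ^ (2 * l) = 1 ∧ x ^ l ≠ 1 := by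
    rw [mul_comm, pow_mul, sq, mul_self_eq_one_iff]
    constructor
    · intro h
      exact ⟨Or.inr h, h ▸ hR⟩
    · rintro ⟨h | h, hne⟩
      · exact absurd h hne
      · exact h
  rw [key, Ne, ← orderOf_dvd_iff_pow_eq_one, ← orderOf_dvd_iff_pow_eq_one]
  exact and_congr_right fun h => Nat.not_dvd_iff_factorization_eq_succ Nat.prime_two hl h

theorem ZMod.intCast_eq_neg_one_iff_dvd {n : ℕ} {x : ℤ} :
    (x : ZMod n) = -1 ↔ (n : ℤ) ∣ x + 1 := by
  rw [← ZMod.intCast_zmod_eq_zero_iff_dvd, Int.cast_add, Int.cast_one, eq_neg_iff_add_eq_zero]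

theorem pow_succ_dvd_pow_add_one {R : Type*} [CommRing R] {x : R} {q k n : ℕ} (hn : Odd n)
    (hqn : q ^ k ∣ n) (h : (q : R) ∣ x + 1) : (q : R) ^ (k + 1) ∣ x ^ n + 1 := by
  obtain ⟨t, rfl⟩ := hqn
  obtain ⟨hqk, ht⟩ := Nat.odd_mul.mp hn
  have hlift : (q : R) ^ (k + 1) ∣ x ^ q ^ k + 1 := by
    simpa [hqk.neg_one_pow] using
      dvd_sub_pow_of_dvd_sub (b := -1) (by rwa [sub_neg_eq_add] : (q : R) ∣ x - -1) k
  have hodd_pow : x ^ q ^ k + 1 ∣ x ^ (q ^ k * t) + 1 := by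
    simpa [pow_mul] using ht.add_dvd_pow_add_pow (x ^ q ^ k) 1
  exact hlift.trans hodd_pow

theorem ZMod.pow_eq_neg_one_iff {p : ℕ} [Fact p.Prime] (hp : p ≠ 2) {x : ZMod p} {l : ℕ}
    (hl : l ≠ 0) :
    x ^ l = -1 ↔ orderOf x ∣ 2 * l ∧ (orderOf x).factorization 2 = l.factorization 2 + 1 :=
  have : Fact (2 < p) := ⟨lt_of_le_of_ne (Fact.out : p.Prime).two_le hp.symm⟩
  pow_eq_neg_one_iff_orderOf ZMod.neg_one_ne_one hl

theorem exists_pow_eq_neg_one_of_factorization_orderOf_eq {ι : Type*} [Fintype ι]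
    {p : ι → ℕ} [∀ i, Fact (p i).Prime] (hp2 : ∀ i, p i ≠ 2) (x : ℤ) {r : ℕ} (hr : 1 ≤ r)
    (h : ∀ i, (orderOf (x : ZMod (p i))).factorization 2 = r) :
    ∃ c ≠ 0, ∀ i, (x : ZMod (p i)) ^ c = -1 := by
  have hd0 : ∀ i, orderOf (x : ZMod (p i)) ≠ 0 := fun i h0 => by
    have := h i
    rw [h0, Nat.factorization_zero, Finsupp.zero_apply] at this
    omega
  set N := ∏ i, orderOf (x : ZMod (p i))
  have hN : N ≠ 0 := Finset.prod_ne_zero_iff.mpr fun i _ => hd0 i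
  have hc0 : 2 ^ (r - 1) * ordCompl[2] N ≠ 0 :=
    mul_ne_zero (pow_ne_zero _ two_ne_zero) (Nat.ordCompl_pos 2 hN).ne'
  refine ⟨_, hc0, fun i => ?_⟩
  rw [ZMod.pow_eq_neg_one_iff (hp2 i) hc0, Nat.factorization_pow_mul_ordCompl Nat.prime_two hN,
    h i, ← mul_assoc, ← pow_succ', Nat.sub_add_cancel hr]
  exact ⟨Nat.dvd_pow_mul_ordCompl (Finset.dvd_prod_of_mem _ (mem_univ i)) (h i).le, rfl⟩

theorem pow_mul_prod_eq_neg_one {ι : Type*} [Fintype ι] {p : ι → ℕ} (a : ι → ℕ)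
    (hp : ∀ i, (p i).Prime) (hodd : ∀ i, Odd (p i)) (hinj : Function.Injective p) (x : ℤ)
    {c : ℕ} (h : ∀ i, (x : ZMod (p i)) ^ c = -1) :
    (x : ZMod (∏ i, p i ^ a i)) ^ (c * ∏ i, p i ^ a i) = -1 := by
  set M := ∏ i, p i ^ a i
  have hM : Odd M :=
    Finset.prod_induction _ Odd (fun _ _ => Odd.mul) odd_one fun i _ => (hodd i).pow
  have hcop : Pairwise (Function.onFun IsCoprime fun i => ((p i ^ a i : ℕ) : ℤ)) :=
    fun i j hij => Nat.isCoprime_iff_coprime.mpr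
      (Nat.Coprime.pow _ _ ((Nat.coprime_primes (hp i) (hp j)).mpr (hinj.ne hij)))
  have hdvd : ∀ i, ((p i ^ a i : ℕ) : ℤ) ∣ (x ^ c) ^ M + 1 := fun i => by
    have hpi : (p i : ℤ) ∣ x ^ c + 1 :=
      ZMod.intCast_eq_neg_one_iff_dvd.mp (by push_cast; exact h i)
    push_cast
    exact (pow_dvd_pow _ (Nat.le_succ _)).trans
      (pow_succ_dvd_pow_add_one hM (Finset.dvd_prod_of_mem _ (mem_univ i)) hpi)
  have := Fintype.prod_dvd_of_coprime hcop hdvd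
  rw [← pow_mul] at this
  rw [← Int.cast_pow, ZMod.intCast_eq_neg_one_iff_dvd]
  exact_mod_cast this

theorem stmt11_general {s : ℕ} (p a : Fin s → ℕ)
    (hp : ∀ i, (p i).Prime) (hodd : ∀ i, Odd (p i)) (hinj : Function.Injective p)
    (ha : ∀ i, 1 ≤ a i) (m : ℕ) (hm : m = ∏ i, p i ^ a i) :
    (∃ l : ℕ, 0 < l ∧ (2 : ZMod m) ^ l = -1) ↔
      ∃ r : ℕ, 1 ≤ r ∧ ∀ i, padicValNat 2 (orderOf (2 : ZMod (p i))) = r := by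
  have : ∀ i, Fact (p i).Prime := fun i => ⟨hp i⟩
  have hp2 : ∀ i, p i ≠ 2 := fun i h2 => Nat.not_odd_iff_even.mpr even_two (h2 ▸ hodd i)
  simp only [← Nat.factorization_def _ Nat.prime_two]
  constructor
  · rintro ⟨l, hl, hpow⟩
    refine ⟨l.factorization 2 + 1, le_add_self, fun i => ?_⟩
    have hpm : p i ∣ m :=
      hm ▸ (dvd_pow_self _ (Nat.one_le_iff_ne_zero.mp (ha i))).trans
        (Finset.dvd_prod_of_mem _ (mem_univ i))
    have hpow_i : (2 : ZMod (p i)) ^ l = -1 := by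
      simpa only [map_pow, map_neg, map_one, map_ofNat] using
        congrArg (ZMod.castHom hpm (ZMod (p i))) hpow
    exact ((ZMod.pow_eq_neg_one_iff (hp2 i) hl.ne').mp hpow_i).2
  · rintro ⟨r, hr, hval⟩
    obtain ⟨c, hc, hpow⟩ :=
      exists_pow_eq_neg_one_of_factorization_orderOf_eq hp2 2 hr (by simpa using hval)
    subst hm
    refine ⟨c * ∏ i, p i ^ a i, Nat.mul_pos (Nat.pos_of_ne_zero hc)
      (Finset.prod_pos fun i _ => pow_pos (hp i).pos _), ?_⟩
    simpa using pow_mul_prod_eq_neg_one a hp hodd hinj 2 (by simpa using hpow)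

theorem stmt11 {s : ℕ} (hs : 0 < s) (p a : Fin s → ℕ)
    (hp : ∀ i, (p i).Prime) (hodd : ∀ i, Odd (p i)) (hinj : Function.Injective p)
    (ha : ∀ i, 1 ≤ a i) (m : ℕ) (hm : m = ∏ i, p i ^ a i) :
    (∃ l : ℕ, 0 < l ∧ (2 : ZMod m) ^ l = -1) ↔
      ∃ r : ℕ, 1 ≤ r ∧ ∀ i, padicValNat 2 (orderOf (2 : ZMod (p i))) = r :=
  stmt11_general p a hp hodd hinj ha m hm
end
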